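/- arXiv:2409.09651 — 2 statements merged into one kernel-verified Lean document; each statement's English description precedes it below -/
import Mathlib

section
/- Let A be a Banach ring, and let I ⊆ J ⊆ A be ideals of the underlying ring with the same topological closure in A. Then J/I is a radical (Jacobson radical) non-unital ring; equivalently, for every a ∈ J, the element 1 + a is invertible in the quotient ring A/I. -/
/-- Let `A` be a Banach ring and `I ⊆ J` two-sided ideals with the same closure. Then `J/I` is
a radical non-unital ring: for every `a ∈ J`, the element `1 + a` is invertible in `A/I`. -/
theorem radical_of_same_closure {A : Type*} [NormedRing A] [CompleteSpace A]
    (h1 : ‖(1 : A)‖ ≤ 1) (I J : TwoSidedIdeal A) (hIJ : I ≤ J)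
    (hcl : closure (I : Set A) = closure (J : Set A)) :
    ∀ a ∈ J, IsUnit (I.ringCon.mk' (1 + a)) := by
  intro a ha
  have hacl : a ∈ closure (I : Set A) := by
    rw [hcl]; exact subset_closure ha
  obtain ⟨b, hbI, hb⟩ := Metric.mem_closure_iff.mp hacl 1 one_pos
  have hnorm : ‖-(a - b)‖ < 1 := by
    rw [norm_neg, ← dist_eq_norm]; exact hb
  have hu : IsUnit (1 + (a - b)) := by
    have := (Units.oneSub (-(a - b)) hnorm).isUnit
    rw [Units.val_oneSub, sub_neg_eq_add] at this; exact this
  have heq : I.ringCon.mk' (1 + a) = I.ringCon.mk' (1 + (a - b)) := by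
    have : I.ringCon (1 + a) (1 + (a - b)) := by
      rw [TwoSidedIdeal.rel_iff]
      simpa using hbI
    exact (RingCon.eq I.ringCon).mpr this
  rw [heq]
  exact hu.map _
end

section
/- Let A be a Banach ring, and let I ⊆ J ⊆ A be ideals of the underlying ring having the same closure. Then the induced map K₀(A/I) → K₀(A/J) is injective. -/
/-!
Every matrix `M` over `A/I` with entries in `J/I` is quasi-regular: since `J ⊆ closure I`, the
entries of `M` lift to elements of `A` of arbitrarily small norm, so `M` lifts to a matrix of
operator norm `< 1`, for which `1 - M` is inverted by the Neumann series. Along a surjection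
whose kernel is radical in this sense, Murray–von Neumann equivalence of idempotents lifts: lift
the implementing matrices, cut them down to the right corners, and correct one of them by an
invertible matrix congruent to `1`. Finally, a stabilising idempotent `r` may be replaced by an
identity matrix, because `r ⊕ (1 - r)` is equivalent to `1`.
-/

/-- Murray–von Neumann equivalence of (idempotent) matrices over a ring. -/
def MvNEquiv {R : Type*} [Ring R] {ι κ : Type*} [Fintype ι] [Fintype κ]
    (p : Matrix ι ι R) (q : Matrix κ κ R) : Prop :=
  ∃ (a : Matrix ι κ R) (b : Matrix κ ι R), a * b = p ∧ b * a = q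

/-- The ring homomorphism between quotients induced by an inequality of ring congruences. -/
def RingCon.quotMap {A : Type*} [Ring A] (c d : RingCon A) (h : c ≤ d) :
    c.Quotient →+* d.Quotient where
  toFun := Quotient.map' id (fun a b hab => h hab)
  map_one' := rfl
  map_mul' := by rintro ⟨a⟩ ⟨b⟩; rfl
  map_zero' := rfl
  map_add' := by rintro ⟨a⟩ ⟨b⟩; rfl

open Matrix

section MurrayVonNeumann

variable {R : Type*} [Ring R] {ι κ μ ν : Type*} [Fintype ι] [Fintype κ] [Fintype μ] [Fintype ν]

theorem IsIdempotentElem.fromBlocks_zero_zero {p : Matrix ι ι R} {r : Matrix κ κ R}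
    (hp : IsIdempotentElem p) (hr : IsIdempotentElem r) :
    IsIdempotentElem (fromBlocks p 0 0 r) := by
  simp [IsIdempotentElem, fromBlocks_multiply, hp.eq, hr.eq]

namespace MvNEquiv

variable {p : Matrix ι ι R} {q : Matrix κ κ R} {t : Matrix μ μ R}

theorem refl (hp : IsIdempotentElem p) : MvNEquiv p p :=
  ⟨p, p, hp, hp⟩

theorem symm (h : MvNEquiv p q) : MvNEquiv q p :=
  let ⟨a, b, hab, hba⟩ := h
  ⟨b, a, hba, hab⟩

theorem trans (h₁ : MvNEquiv p q) (h₂ : MvNEquiv q t) (hp : IsIdempotentElem p)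
    (ht : IsIdempotentElem t) : MvNEquiv p t := by
  obtain ⟨a, b, hab, hba⟩ := h₁
  obtain ⟨c, d, hcd, hdc⟩ := h₂
  refine ⟨a * c, d * b, ?_, ?_⟩
  · calc a * c * (d * b) = a * (c * d) * b := by simp only [Matrix.mul_assoc]
      _ = a * b * (a * b) := by rw [hcd, ← hba]; simp only [Matrix.mul_assoc]
      _ = p := by rw [hab, hp.eq]
  · calc d * b * (a * c) = d * (b * a) * c := by simp only [Matrix.mul_assoc]
      _ = d * c * (d * c) := by rw [hba, ← hcd]; simp only [Matrix.mul_assoc]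
      _ = t := by rw [hdc, ht.eq]

theorem fromBlocks_zero_zero {p' : Matrix μ μ R} {q' : Matrix ν ν R}
    (h : MvNEquiv p q) (h' : MvNEquiv p' q') :
    MvNEquiv (fromBlocks p 0 0 p') (fromBlocks q 0 0 q') := by
  obtain ⟨a, b, hab, hba⟩ := h
  obtain ⟨a', b', hab', hba'⟩ := h'
  exact ⟨fromBlocks a 0 0 a', fromBlocks b 0 0 b', by simp [fromBlocks_multiply, hab, hab'],
    by simp [fromBlocks_multiply, hba, hba']⟩

theorem fromBlocks_fromBlocks_one_sub [DecidableEq μ] {r : Matrix μ μ R}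
    (hp : IsIdempotentElem p) (hr : IsIdempotentElem r) :
    MvNEquiv (fromBlocks (fromBlocks p 0 0 r) 0 0 (1 - r))
      (fromBlocks p 0 0 (1 : Matrix μ μ R)) := by
  refine ⟨fromRows (fromBlocks p 0 0 r) (fromCols 0 (1 - r)),
    fromCols (fromBlocks p 0 0 r) (fromRows 0 (1 - r)), ?_, ?_⟩
  · simp [fromBlocks_multiply, fromBlocks_mul_fromRows,
      fromCols_mul_fromBlocks, fromCols_mul_fromRows, hp.eq, hr.eq, hr.mul_one_sub_self,
      hr.one_sub_mul_self, hr.one_sub.eq]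
  · rw [fromCols_mul_fromRows, fromBlocks_multiply]
    ext (i | i) (j | j) <;> simp [hp.eq, hr.eq, hr.one_sub.eq]

theorem fromBlocks_one_of_fromBlocks [DecidableEq μ] {r : Matrix μ μ R}
    (hp : IsIdempotentElem p) (hq : IsIdempotentElem q) (hr : IsIdempotentElem r)
    (h : MvNEquiv (fromBlocks p 0 0 r) (fromBlocks q 0 0 r)) :
    MvNEquiv (fromBlocks p 0 0 (1 : Matrix μ μ R)) (fromBlocks q 0 0 (1 : Matrix μ μ R)) := by
  have hp1 := hp.fromBlocks_zero_zero (IsIdempotentElem.one (M := Matrix μ μ R))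
  have hq1 := hq.fromBlocks_zero_zero (IsIdempotentElem.one (M := Matrix μ μ R))
  refine ((fromBlocks_fromBlocks_one_sub hp hr).symm.trans
    (h.fromBlocks_zero_zero (.refl hr.one_sub)) hp1 ?_).trans
    (fromBlocks_fromBlocks_one_sub hq hr) hp1 hq1
  exact (hq.fromBlocks_zero_zero hr).fromBlocks_zero_zero hr.one_sub

end MvNEquiv

end MurrayVonNeumann

section Lifting

theorem Matrix.map_surjective {m n α β : Type*} {f : α → β} (hf : Function.Surjective f) :
    Function.Surjective fun M : Matrix m n α => M.map f :=
  fun N => ⟨N.map (Function.surjInv hf), by ext; simp [Function.surjInv_eq]⟩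

variable {R S : Type*} [Ring R] [Ring S] {ι κ : Type*} [Fintype ι] [Fintype κ]

theorem IsIdempotentElem.eq_zero_of_isUnit_one_sub {y : R} (hy : IsIdempotentElem y)
    (hu : IsUnit (1 - y)) : y = 0 :=
  sub_eq_self.mp ((IsIdempotentElem.iff_eq_one_of_isUnit hu).mp hy.one_sub)

theorem MvNEquiv.exists_corner {p : Matrix ι ι R} {q : Matrix κ κ R} (hp : IsIdempotentElem p)
    (hq : IsIdempotentElem q) (h : MvNEquiv p q) :
    ∃ (a : Matrix ι κ R) (b : Matrix κ ι R),
      a * b = p ∧ b * a = q ∧ a * q = a ∧ q * b = b ∧ b * p = b := by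
  obtain ⟨a, b, hab, hba⟩ := h
  refine ⟨a * q, q * b * p, ?_, ?_, ?_, ?_, ?_⟩
  · calc a * q * (q * b * p) = a * b * (a * b) * (a * b * (a * b)) := by
          rw [← hab, ← hba]; simp only [Matrix.mul_assoc]
      _ = p := by rw [hab, hp.eq, hp.eq]
  · calc q * b * p * (a * q) = b * a * (b * a) * (b * a * (b * a)) := by
          rw [← hab, ← hba]; simp only [Matrix.mul_assoc]
      _ = q := by rw [hba, hq.eq, hq.eq]
  · rw [Matrix.mul_assoc, hq.eq]
  · rw [← Matrix.mul_assoc, ← Matrix.mul_assoc, hq.eq]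
  · rw [Matrix.mul_assoc, hp.eq]

/-- `hι` and `hκ` say that matrices over `ker φ` lie in the Jacobson radical. -/
theorem MvNEquiv.of_map [DecidableEq ι] [DecidableEq κ] (φ : R →+* S)
    (hφ : Function.Surjective φ)
    (hι : ∀ M : Matrix ι ι R, M.map φ = 0 → IsUnit (1 - M))
    (hκ : ∀ M : Matrix κ κ R, M.map φ = 0 → IsUnit (1 - M))
    {e : Matrix ι ι R} {f : Matrix κ κ R} (he : IsIdempotentElem e) (hf : IsIdempotentElem f)
    (h : MvNEquiv (e.map φ) (f.map φ)) : MvNEquiv e f := by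
  have he' : IsIdempotentElem (e.map φ) := he.map φ.mapMatrix
  have hf' : IsIdempotentElem (f.map φ) := hf.map φ.mapMatrix
  obtain ⟨u, v, huv, hvu, huf, hfv, hve⟩ := h.exists_corner he' hf'
  obtain ⟨c, rfl⟩ : ∃ c : Matrix ι κ R, c.map φ = u := Matrix.map_surjective hφ u
  obtain ⟨d, rfl⟩ : ∃ d : Matrix κ ι R, d.map φ = v := Matrix.map_surjective hφ v
  set a := c * f
  set b := f * d * e
  have haf : a * f = a := by rw [Matrix.mul_assoc, hf.eq]
  have hfb : f * b = b := by rw [← Matrix.mul_assoc, ← Matrix.mul_assoc, hf.eq]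
  have hbe : b * e = b := by rw [Matrix.mul_assoc, he.eq]
  have ha : a.map φ = c.map φ := by rw [Matrix.map_mul, huf]
  have hb : b.map φ = d.map φ := by rw [Matrix.map_mul, Matrix.map_mul, hfv, hve]
  -- `g ≡ 1` modulo the kernel and `g * e = a * b`, so `g⁻¹ * a` is a left inverse of `b` on `e`
  set g := 1 - (e - a * b)
  have hker : (e - a * b).map φ = 0 := by
    rw [Matrix.map_sub _ (map_sub φ), Matrix.map_mul, ha, hb, huv, sub_self]
  have hg : IsUnit g := hι _ hker
  have hg1 : g.map φ = 1 := by
    rw [Matrix.map_sub _ (map_sub φ), hker, sub_zero, Matrix.map_one _ (map_zero φ) (map_one φ)]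
  have hge : g * e = a * b := by
    rw [sub_mul, sub_mul, he.eq, Matrix.mul_assoc a, hbe, Matrix.one_mul, sub_sub_cancel]
  set a' := Ring.inverse g * a
  have ha'f : a' * f = a' := by simp only [a', Matrix.mul_assoc, haf]
  have ha'b : a' * b = e := by
    rw [Matrix.mul_assoc, ← hge, ← Matrix.mul_assoc, Ring.inverse_mul_cancel _ hg, Matrix.one_mul]
  have ha' : a'.map φ = c.map φ := by
    have hginv : (Ring.inverse g).map φ = 1 := by
      calc (Ring.inverse g).map φ = (Ring.inverse g * g).map φ := by
            rw [Matrix.map_mul, hg1, Matrix.mul_one]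
        _ = 1 := by rw [Ring.inverse_mul_cancel _ hg, Matrix.map_one _ (map_zero φ) (map_one φ)]
    rw [Matrix.map_mul, hginv, Matrix.one_mul, ha]
  refine ⟨a', b, ha'b, ?_⟩
  -- `b * a'` is an idempotent below `f` and congruent to it, hence equal to it
  have hidem : IsIdempotentElem (b * a') := by
    rw [IsIdempotentElem, Matrix.mul_assoc, ← Matrix.mul_assoc a', ha'b, ← Matrix.mul_assoc, hbe]
  have hfba : f * (b * a') = b * a' := by rw [← Matrix.mul_assoc, hfb]
  have hbaf : b * a' * f = b * a' := by rw [Matrix.mul_assoc, ha'f]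
  have hker' : (f - b * a').map φ = 0 := by
    rw [Matrix.map_sub _ (map_sub φ), Matrix.map_mul, hb, ha', hvu, sub_self]
  exact (sub_eq_zero.mp ((hidem.sub hf hbaf hfba).eq_zero_of_isUnit_one_sub (hκ _ hker'))).symm

end Lifting

section Banach

open scoped NNReal

attribute [local instance] Matrix.linftyOpSeminormedAddCommGroup Matrix.linftyOpNormedRing

theorem Matrix.linfty_opNNNorm_le_card_mul {m n α : Type*} [Fintype m] [Fintype n]
    [SeminormedAddCommGroup α] {N : Matrix m n α} {C : ℝ≥0} (h : ∀ i j, ‖N i j‖₊ ≤ C) :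
    ‖N‖₊ ≤ Fintype.card n * C := by
  rw [linfty_opNNNorm_def]
  refine Finset.sup_le fun i _ => ?_
  calc ∑ j, ‖N i j‖₊ ≤ Finset.univ.card • C := Finset.sum_le_card_nsmul _ _ _ fun j _ => h i j
    _ = Fintype.card n * C := by rw [Finset.card_univ, nsmul_eq_mul]

variable {A B : Type*} [NormedRing A] [CompleteSpace A] [Ring B]

theorem Matrix.isUnit_one_sub_of_forall_exists_norm_lt {ι : Type*} [Fintype ι] [DecidableEq ι]
    (π : A →+* B) (M : Matrix ι ι B) (hM : ∀ i j, ∀ ε > 0, ∃ a : A, ‖a‖ < ε ∧ π a = M i j) :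
    IsUnit (1 - M) := by
  -- small enough that a lift has ℓ∞-operator norm `< 1`
  set ε : ℝ≥0 := (Fintype.card ι + 1 : ℝ≥0)⁻¹
  choose N hN hπN using fun i j => hM i j ε (by positivity)
  have : @CompleteSpace (Matrix ι ι A) PseudoMetricSpace.toUniformSpace :=
    inferInstanceAs (CompleteSpace (ι → ι → A))
  have hnorm : ‖Matrix.of N‖₊ < 1 := by
    refine (linfty_opNNNorm_le_card_mul fun i j => (hN i j).le).trans_lt ?_
    rw [← div_eq_mul_inv, div_lt_one (by positivity)]
    exact lt_add_one _
  have hmap : π.mapMatrix (Matrix.of N) = M := Matrix.ext hπN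
  have hunit := (isUnit_one_sub_of_norm_lt_one hnorm).map π.mapMatrix
  rwa [map_sub, map_one, hmap] at hunit

end Banach

theorem RingCon.quotMap_surjective {A : Type*} [Ring A] (c d : RingCon A) (h : c ≤ d) :
    Function.Surjective (RingCon.quotMap c d h) := by
  rintro ⟨a⟩
  exact ⟨a, rfl⟩

theorem TwoSidedIdeal.exists_norm_lt_of_quotMap_eq_zero {A : Type*} [NormedRing A]
    {I J : TwoSidedIdeal A} (hIJ : I ≤ J) (hJ : (J : Set A) ⊆ closure I)
    {x : I.ringCon.Quotient}
    (hx : RingCon.quotMap I.ringCon J.ringCon (TwoSidedIdeal.ringCon_le_iff.mp hIJ) x = 0)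
    {ε : ℝ} (hε : 0 < ε) : ∃ a : A, ‖a‖ < ε ∧ RingCon.mk' I.ringCon a = x := by
  obtain ⟨a, rfl⟩ := RingCon.mk'_surjective (c := I.ringCon) x
  have haJ : a ∈ J := (RingCon.eq J.ringCon).mp hx
  obtain ⟨b, hbI, hab⟩ := Metric.mem_closure_iff.mp (hJ haJ) ε hε
  refine ⟨a - b, by rwa [← dist_eq_norm], ?_⟩
  have hb : RingCon.mk' I.ringCon b = 0 := (RingCon.eq I.ringCon).mpr hbI
  rw [map_sub, hb, sub_zero]

theorem K0_injective_of_same_closure_general {A : Type*} [NormedRing A] [CompleteSpace A]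
    (I J : TwoSidedIdeal A) (hIJ : I ≤ J)
    (hcl : closure (I : Set A) = closure (J : Set A)) :
    ∀ (n m : ℕ) (p : Matrix (Fin n) (Fin n) I.ringCon.Quotient)
      (q : Matrix (Fin m) (Fin m) I.ringCon.Quotient), p * p = p → q * q = q →
      (∃ (k : ℕ) (r : Matrix (Fin k) (Fin k) J.ringCon.Quotient), r * r = r ∧
        MvNEquiv
          (Matrix.fromBlocks
            (p.map (RingCon.quotMap I.ringCon J.ringCon (TwoSidedIdeal.ringCon_le_iff.mp hIJ)))
            0 0 r)
          (Matrix.fromBlocks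
            (q.map (RingCon.quotMap I.ringCon J.ringCon (TwoSidedIdeal.ringCon_le_iff.mp hIJ)))
            0 0 r)) →
      ∃ (k : ℕ) (s : Matrix (Fin k) (Fin k) I.ringCon.Quotient), s * s = s ∧
        MvNEquiv (Matrix.fromBlocks p 0 0 s) (Matrix.fromBlocks q 0 0 s) := by
  rintro n m p q (hp : IsIdempotentElem p) (hq : IsIdempotentElem q) ⟨k, r, hr, hpqr⟩
  set φ := RingCon.quotMap I.ringCon J.ringCon (TwoSidedIdeal.ringCon_le_iff.mp hIJ)
  have hJ : (J : Set A) ⊆ closure I := hcl ▸ subset_closure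
  have hrad {ι : Type} [Fintype ι] [DecidableEq ι] (M : Matrix ι ι I.ringCon.Quotient)
      (hM : M.map φ = 0) : IsUnit (1 - M) :=
    M.isUnit_one_sub_of_forall_exists_norm_lt (RingCon.mk' I.ringCon) fun i j _ hε =>
      TwoSidedIdeal.exists_norm_lt_of_quotMap_eq_zero hIJ hJ (congrFun₂ hM i j) hε
  refine ⟨k, 1, mul_one 1, MvNEquiv.of_map φ (RingCon.quotMap_surjective _ _ _) hrad hrad
    (hp.fromBlocks_zero_zero .one) (hq.fromBlocks_zero_zero .one) ?_⟩
  simpa [fromBlocks_map] using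
    MvNEquiv.fromBlocks_one_of_fromBlocks (hp.map φ.mapMatrix) (hq.map φ.mapMatrix) hr hpqr

/-- Let `A` be a Banach ring and `I ⊆ J` two-sided ideals with the same closure. Then
`K₀(A/I) → K₀(A/J)` is injective: if two idempotent matrices `p`, `q` over `A/I` have equal
classes in `K₀(A/J)` (i.e. their images become stably Murray–von Neumann equivalent over
`A/J`), then they already have equal classes in `K₀(A/I)`. -/
theorem K0_injective_of_same_closure {A : Type*} [NormedRing A] [CompleteSpace A]
    (h1 : ‖(1 : A)‖ ≤ 1) (I J : TwoSidedIdeal A) (hIJ : I ≤ J)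
    (hcl : closure (I : Set A) = closure (J : Set A)) :
    ∀ (n m : ℕ) (p : Matrix (Fin n) (Fin n) I.ringCon.Quotient)
      (q : Matrix (Fin m) (Fin m) I.ringCon.Quotient), p * p = p → q * q = q →
      (∃ (k : ℕ) (r : Matrix (Fin k) (Fin k) J.ringCon.Quotient), r * r = r ∧
        MvNEquiv
          (Matrix.fromBlocks
            (p.map (RingCon.quotMap I.ringCon J.ringCon (TwoSidedIdeal.ringCon_le_iff.mp hIJ)))
            0 0 r)
          (Matrix.fromBlocks
            (q.map (RingCon.quotMap I.ringCon J.ringCon (TwoSidedIdeal.ringCon_le_iff.mp hIJ)))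
            0 0 r)) →
      ∃ (k : ℕ) (s : Matrix (Fin k) (Fin k) I.ringCon.Quotient), s * s = s ∧
        MvNEquiv (Matrix.fromBlocks p 0 0 s) (Matrix.fromBlocks q 0 0 s) :=
  K0_injective_of_same_closure_general I J hIJ hcl
end
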